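/- arXiv:1909.05692 — 4 statements merged into one kernel-verified Lean document; each statement's English description precedes it below -/
import Mathlib

section
/- Let F be a field, let L̄ ∈ F^{m×m} be an invertible lower triangular matrix, let Ū ∈ F^{n×n} be an invertible upper triangular matrix, and let M ∈ F^{m×n}. Then for every 1 ≤ i ≤ m and 1 ≤ j ≤ n, the rank of the i×j leading submatrix of L̄·M·Ū equals the rank of the i×j leading submatrix of M. In particular, L̄·M·Ū and M have the same rank profile matrix. -/
open Matrix

variable {F : Type*} [Field F]

open Classical in
/-- `R` is the rank profile matrix of `A`: a `{0,1}`-matrix with exactly `rank A`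
nonzero entries, no two of which share a row or a column, all of whose leading
submatrices have the same rank as the corresponding leading submatrices of `A`. -/
def IsRankProfileMatrix {m n : ℕ} (A R : Matrix (Fin m) (Fin n) F) : Prop :=
  (∀ i j, R i j = 0 ∨ R i j = 1) ∧
  (Finset.univ.filter fun p : Fin m × Fin n => R p.1 p.2 ≠ 0).card = A.rank ∧
  (∀ i j i' j', R i j ≠ 0 → R i' j' ≠ 0 → (i = i' ↔ j = j')) ∧
  ∀ (i j : ℕ) (hi : i ≤ m) (hj : j ≤ n),
    (R.submatrix (Fin.castLE hi) (Fin.castLE hj)).rank =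
      (A.submatrix (Fin.castLE hi) (Fin.castLE hj)).rank

lemma submatrix_mul_lower {m n : ℕ} (Lb : Matrix (Fin m) (Fin m) F)
    (hLtri : ∀ i j : Fin m, i < j → Lb i j = 0)
    (A : Matrix (Fin m) (Fin n) F) {i : ℕ} (hi : i ≤ m) {o : Type*} [Fintype o] (g : o → Fin n) :
    (Lb * A).submatrix (Fin.castLE hi) g =
      (Lb.submatrix (Fin.castLE hi) (Fin.castLE hi)) * (A.submatrix (Fin.castLE hi) g) := by
  ext p q
  simp only [submatrix_apply, mul_apply]
  have h1 : ∑ x : Fin i, Lb (Fin.castLE hi p) (Fin.castLE hi x) * A (Fin.castLE hi x) (g q)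
      = ∑ k ∈ Finset.univ.map (Fin.castLEEmb hi), Lb (Fin.castLE hi p) k * A k (g q) :=
    by rw [Finset.sum_map]; rfl
  rw [h1]
  refine (Finset.sum_subset (Finset.subset_univ _) ?_).symm
  intro k _ hk
  have hk' : ¬ (k : ℕ) < i := by
    intro h
    exact hk (by simp [Fin.castLEEmb]; exact ⟨⟨k, h⟩, by ext; simp⟩)
  have : Fin.castLE hi p < k := by
    have := p.isLt
    simp [Fin.lt_def]; omega
  rw [hLtri _ _ this, zero_mul]

lemma submatrix_mul_upper {m n : ℕ} (Ub : Matrix (Fin n) (Fin n) F)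
    (hUtri : ∀ i j : Fin n, j < i → Ub i j = 0)
    (A : Matrix (Fin m) (Fin n) F) {j : ℕ} (hj : j ≤ n) {o : Type*} [Fintype o] (f : o → Fin m) :
    (A * Ub).submatrix f (Fin.castLE hj) =
      (A.submatrix f (Fin.castLE hj)) * (Ub.submatrix (Fin.castLE hj) (Fin.castLE hj)) := by
  ext p q
  simp only [submatrix_apply, mul_apply]
  have h1 : ∑ x : Fin j, A (f p) (Fin.castLE hj x) * Ub (Fin.castLE hj x) (Fin.castLE hj q)
      = ∑ k ∈ Finset.univ.map (Fin.castLEEmb hj), A (f p) k * Ub k (Fin.castLE hj q) :=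
    by rw [Finset.sum_map]; rfl
  rw [h1]
  refine (Finset.sum_subset (Finset.subset_univ _) ?_).symm
  intro k _ hk
  have hk' : ¬ (k : ℕ) < j := by
    intro h
    exact hk (by simp [Fin.castLEEmb]; exact ⟨⟨k, h⟩, by ext; simp⟩)
  have : Fin.castLE hj q < k := by
    have := q.isLt
    simp [Fin.lt_def]; omega
  rw [hUtri _ _ this, mul_zero]

lemma det_submatrix_lower_isUnit {m : ℕ} (Lb : Matrix (Fin m) (Fin m) F)
    (hLtri : ∀ i j : Fin m, i < j → Lb i j = 0) (hL : IsUnit Lb)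
    {i : ℕ} (hi : i ≤ m) :
    IsUnit (Lb.submatrix (Fin.castLE hi) (Fin.castLE hi)).det := by
  have hbt : Lb.BlockTriangular OrderDual.toDual := fun a b h => hLtri _ _ h
  have hdet : Lb.det = ∏ k, Lb k k := Matrix.det_of_lowerTriangular Lb hbt
  have hLd : IsUnit Lb.det := (Matrix.isUnit_iff_isUnit_det Lb).mp hL
  have hdiag : ∀ k, Lb k k ≠ 0 := by
    intro k hk
    exact hLd.ne_zero (by rw [hdet]; exact Finset.prod_eq_zero (Finset.mem_univ k) hk)
  have h2 : (Lb.submatrix (Fin.castLE hi) (Fin.castLE hi)).det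
      = ∏ k : Fin i, Lb (Fin.castLE hi k) (Fin.castLE hi k) := by
    refine Matrix.det_of_lowerTriangular _ (fun a b hab => hLtri _ _ ?_)
    have h3 : a < b := hab
    exact h3
  rw [h2]
  exact isUnit_iff_ne_zero.mpr (Finset.prod_ne_zero_iff.mpr fun k _ => hdiag _)

lemma det_submatrix_upper_isUnit {n : ℕ} (Ub : Matrix (Fin n) (Fin n) F)
    (hUtri : ∀ i j : Fin n, j < i → Ub i j = 0) (hU : IsUnit Ub)
    {j : ℕ} (hj : j ≤ n) :
    IsUnit (Ub.submatrix (Fin.castLE hj) (Fin.castLE hj)).det := by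
  have hbt : Ub.BlockTriangular id := fun a b h => hUtri _ _ h
  have hdet : Ub.det = ∏ k, Ub k k := Matrix.det_of_upperTriangular hbt
  have hUd : IsUnit Ub.det := (Matrix.isUnit_iff_isUnit_det Ub).mp hU
  have hdiag : ∀ k, Ub k k ≠ 0 := by
    intro k hk
    exact hUd.ne_zero (by rw [hdet]; exact Finset.prod_eq_zero (Finset.mem_univ k) hk)
  have h2 : (Ub.submatrix (Fin.castLE hj) (Fin.castLE hj)).det
      = ∏ k : Fin j, Ub (Fin.castLE hj k) (Fin.castLE hj k) := by
    refine Matrix.det_of_upperTriangular (fun a b hab => hUtri _ _ ?_)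
    have h3 : b < a := hab
    exact h3
  rw [h2]
  exact isUnit_iff_ne_zero.mpr (Finset.prod_ne_zero_iff.mpr fun k _ => hdiag _)

lemma leading_rank_eq {m n : ℕ}
    (Lb : Matrix (Fin m) (Fin m) F)
    (hLtri : ∀ i j : Fin m, i < j → Lb i j = 0) (hL : IsUnit Lb)
    (Ub : Matrix (Fin n) (Fin n) F)
    (hUtri : ∀ i j : Fin n, j < i → Ub i j = 0) (hU : IsUnit Ub)
    (M : Matrix (Fin m) (Fin n) F) {i j : ℕ} (hi : i ≤ m) (hj : j ≤ n) :
    ((Lb * M * Ub).submatrix (Fin.castLE hi) (Fin.castLE hj)).rank =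
      (M.submatrix (Fin.castLE hi) (Fin.castLE hj)).rank := by
  rw [submatrix_mul_upper Ub hUtri (Lb * M) hj,
    submatrix_mul_lower Lb hLtri M hi,
    Matrix.rank_mul_eq_left_of_isUnit_det _ _ (det_submatrix_upper_isUnit Ub hUtri hU hj),
    Matrix.rank_mul_eq_right_of_isUnit_det _ _ (det_submatrix_lower_isUnit Lb hLtri hL hi)]

/-- multiplying `M` on the left by an invertible lower triangular matrix
and on the right by an invertible upper triangular matrix preserves the ranks of all
leading submatrices; in particular it preserves the rank profile matrix. -/
theorem leading_ranks_invariant_triangular_equiv {m n : ℕ}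
    (Lb : Matrix (Fin m) (Fin m) F)
    (hLtri : ∀ i j : Fin m, i < j → Lb i j = 0) (hL : IsUnit Lb)
    (Ub : Matrix (Fin n) (Fin n) F)
    (hUtri : ∀ i j : Fin n, j < i → Ub i j = 0) (hU : IsUnit Ub)
    (M : Matrix (Fin m) (Fin n) F) :
    (∀ (i j : ℕ), 1 ≤ i → 1 ≤ j → ∀ (hi : i ≤ m) (hj : j ≤ n),
      ((Lb * M * Ub).submatrix (Fin.castLE hi) (Fin.castLE hj)).rank =
        (M.submatrix (Fin.castLE hi) (Fin.castLE hj)).rank) ∧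
    ∀ R : Matrix (Fin m) (Fin n) F,
      IsRankProfileMatrix (Lb * M * Ub) R ↔ IsRankProfileMatrix M R := by
  
  have key : ∀ (i j : ℕ) (hi : i ≤ m) (hj : j ≤ n),
      ((Lb * M * Ub).submatrix (Fin.castLE hi) (Fin.castLE hj)).rank =
        (M.submatrix (Fin.castLE hi) (Fin.castLE hj)).rank :=
    fun i j hi hj => leading_rank_eq Lb hLtri hL Ub hUtri hU M hi hj
  have hrank : (Lb * M * Ub).rank = M.rank := by
    rw [Matrix.rank_mul_eq_left_of_isUnit_det _ _ ((Matrix.isUnit_iff_isUnit_det Ub).mp hU),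
      Matrix.rank_mul_eq_right_of_isUnit_det _ _ ((Matrix.isUnit_iff_isUnit_det Lb).mp hL)]
  refine ⟨fun i j _ _ hi hj => key i j hi hj, fun R => ?_⟩
  unfold IsRankProfileMatrix
  rw [hrank]
  constructor <;> rintro ⟨h1, h2, h3, h4⟩ <;>
    exact ⟨h1, h2, h3, fun i j hi hj => by rw [h4 i j hi hj, key i j hi hj]⟩
end

section
/- Let F be a field and let A ∈ F^{n×n} be invertible with A = L·U·P, where L ∈ F^{n×n} is invertible lower triangular, U ∈ F^{n×n} is invertible upper triangular, and P is an n×n permutation matrix. Then the rank profile matrix of A equals P if and only if P^T·U·P is upper triangular. -/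
/-!
Write `P` as the permutation matrix of `σ`, so that column `σ a` of `U P` is column `a` of `U`.
Multiplying on the left by the lower triangular `L` does not change the rank of any leading
submatrix, so `A` may be replaced by `U P`. The condition on `Pᵀ U P` says that `U a b = 0`
whenever `σ b < σ a`. Under it, the only nonzero rows of the leading `i × j` block of `U P` are
the rows `a < i` with `σ a < j`, and these rows, together with the columns `σ a`, carry an upper
triangular block with the nonzero diagonal of `U`: the rank of the block is the number of such
rows, which is also the rank of the leading `i × j` block of `P`. Conversely, if `U x y ≠ 0` with
`σ y < σ x`, then in the leading `(x + 1) × σ x` block the row `x` and the column `σ y` enlarge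
that triangular block, so there the rank of `U P` exceeds the rank of `P`.
-/

open Matrix

variable {F : Type*} [Field F]

/-- `P` is a permutation matrix. -/
def IsPermMatrix {k : ℕ} (P : Matrix (Fin k) (Fin k) F) : Prop :=
  ∃ σ : Equiv.Perm (Fin k), P = σ.permMatrix F

open scoped Finset

namespace Matrix

section Semiring

variable {α : Type*} [NonAssocSemiring α]

theorem submatrix_castLE_mul_of_isLowerTriangular {n i : ℕ} {ι κ : Type*}
    {L : Matrix (Fin n) (Fin n) α} (hL : L.IsLowerTriangular) (M : Matrix (Fin n) ι α)
    (hi : i ≤ n) (c : κ → ι) :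
    (L * M).submatrix (Fin.castLE hi) c =
      L.submatrix (Fin.castLE hi) (Fin.castLE hi) * M.submatrix (Fin.castLE hi) c := by
  ext a b
  refine (Fintype.sum_of_injective (Fin.castLE hi) (Fin.castLE_injective hi) _ _
    (fun k hk => ?_) fun _ => rfl).symm
  have hik : i ≤ k := by
    by_contra! hki
    exact hk ⟨⟨k, hki⟩, rfl⟩
  have hzero : L (a.castLE hi) k = 0 := hL (Fin.lt_def.mpr (a.isLt.trans_le hik))
  change L (a.castLE hi) k * M k (c b) = 0
  rw [hzero, zero_mul]

theorem mul_permMatrix_apply {m n : Type*} [Fintype n] [DecidableEq n] (M : Matrix m n α)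
    (σ : Equiv.Perm n) (a : m) (b : n) : (M * σ.permMatrix α) a b = M a (σ.symm b) := by
  rw [PEquiv.mul_toMatrix_toPEquiv, submatrix_apply, id]

theorem isUpperTriangular_transpose_permMatrix_mul_mul_permMatrix_iff {n : Type*} [Fintype n]
    [DecidableEq n] [LinearOrder n] (U : Matrix n n α) (σ : Equiv.Perm n) :
    ((σ.permMatrix α)ᵀ * U * σ.permMatrix α).IsUpperTriangular ↔ U.BlockTriangular σ := by
  have hconj : (σ.permMatrix α)ᵀ * U * σ.permMatrix α = reindex σ σ U := by
    rw [transpose_permMatrix, PEquiv.toMatrix_toPEquiv_mul, PEquiv.mul_toMatrix_toPEquiv,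
      submatrix_submatrix]
    rfl
  rw [hconj]
  exact blockTriangular_reindex_iff

end Semiring

variable {R : Type*} [CommRing R] [IsDomain R]

theorem IsUpperTriangular.diag_ne_zero_of_isUnit {m : Type*} [Fintype m] [DecidableEq m]
    [LinearOrder m] {M : Matrix m m R} (h : M.IsUpperTriangular) (hM : IsUnit M) (k : m) :
    M k k ≠ 0 := by
  have hdet := ((isUnit_iff_isUnit_det M).mp hM).ne_zero
  rw [det_of_isUpperTriangular h] at hdet
  exact Finset.prod_ne_zero_iff.mp hdet k (Finset.mem_univ k)

theorem IsLowerTriangular.diag_ne_zero_of_isUnit {m : Type*} [Fintype m] [DecidableEq m]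
    [LinearOrder m] {M : Matrix m m R} (h : M.IsLowerTriangular) (hM : IsUnit M) (k : m) :
    M k k ≠ 0 := by
  have hdet := ((isUnit_iff_isUnit_det M).mp hM).ne_zero
  rw [det_of_isLowerTriangular M h] at hdet
  exact Finset.prod_ne_zero_iff.mp hdet k (Finset.mem_univ k)

theorem card_le_rank_of_submatrix_isUpperTriangular {m n ι : Type*} [Fintype n] [Fintype ι]
    [LinearOrder ι] (A : Matrix m n R) (r : ι → m) (c : ι → n)
    (htri : (A.submatrix r c).IsUpperTriangular) (hd : ∀ k, A (r k) (c k) ≠ 0) :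
    Fintype.card ι ≤ A.rank := by
  classical
  have hdet : (A.submatrix r c).det ≠ 0 := by
    rw [det_of_isUpperTriangular htri]
    exact Finset.prod_ne_zero_iff.mpr fun k _ => hd k
  calc Fintype.card ι = (A.submatrix r c).rank := (rank_of_det_ne_zero hdet).symm
    _ ≤ A.rank := rank_submatrix_le A r c

theorem rank_submatrix_castLE_mul_of_isLowerTriangular {n i : ℕ} {ι κ : Type*} [Fintype κ]
    {L : Matrix (Fin n) (Fin n) R} (hL : L.IsLowerTriangular) (hd : ∀ k, L k k ≠ 0)
    (M : Matrix (Fin n) ι R) (hi : i ≤ n) (c : κ → ι) :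
    ((L * M).submatrix (Fin.castLE hi) c).rank = (M.submatrix (Fin.castLE hi) c).rank := by
  rw [submatrix_castLE_mul_of_isLowerTriangular hL M hi c]
  exact rank_mul_eq_right_of_isLowerTriangular _ _ (fun a b hab => hL hab) fun a => hd _

theorem rank_submatrix_castLE_mul_permMatrix_le {n i j : ℕ} {U : Matrix (Fin n) (Fin n) R}
    {σ : Equiv.Perm (Fin n)} (hσ : U.BlockTriangular σ) (hi : i ≤ n) (hj : j ≤ n) :
    ((U * σ.permMatrix R).submatrix (Fin.castLE hi) (Fin.castLE hj)).rank ≤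
      #{a : Fin i | (σ (a.castLE hi) : ℕ) < j} := by
  classical
  refine rank_le_card_of_support_subset _ _ (Function.support_subset_iff'.mpr fun a ha => ?_)
  ext b
  simp only [Finset.mem_filter, Finset.mem_univ, true_and, not_lt, Finset.mem_coe] at ha
  rw [row_apply, submatrix_apply, mul_permMatrix_apply, Pi.zero_apply]
  refine hσ ?_
  rw [Equiv.apply_symm_apply, Fin.lt_def]
  exact b.isLt.trans_le ha

theorem card_le_rank_submatrix_castLE_mul_permMatrix {n i j : ℕ} (U : Matrix (Fin n) (Fin n) R)
    (σ : Equiv.Perm (Fin n)) (hi : i ≤ n) (hj : j ≤ n) (S : Finset (Fin i)) (g : Fin i → Fin n)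
    (hS : ∀ a ∈ S, (σ (g a) : ℕ) < j)
    (htri : ∀ a ∈ S, ∀ b ∈ S, b < a → U (a.castLE hi) (g b) = 0)
    (hd : ∀ a ∈ S, U (a.castLE hi) (g a) ≠ 0) :
    #S ≤ ((U * σ.permMatrix R).submatrix (Fin.castLE hi) (Fin.castLE hj)).rank := by
  have hentry : ∀ a b : S, (U * σ.permMatrix R).submatrix (Fin.castLE hi) (Fin.castLE hj) a
      ⟨σ (g b), hS b b.2⟩ = U ((a : Fin i).castLE hi) (g b) := fun a b => by
    rw [submatrix_apply, mul_permMatrix_apply]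
    exact congrArg _ (σ.symm_apply_apply _)
  rw [← Fintype.card_coe S]
  refine card_le_rank_of_submatrix_isUpperTriangular _ (fun a => a) (fun b => ⟨σ (g b), hS b b.2⟩)
    (fun a b hba => ?_) fun a => ?_
  · rw [submatrix_apply, hentry]
    exact htri a a.2 b b.2 hba
  · rw [hentry]
    exact hd a a.2

theorem rank_submatrix_castLE_mul_permMatrix {n i j : ℕ} {U : Matrix (Fin n) (Fin n) R}
    (hU : U.IsUpperTriangular) (hd : ∀ k, U k k ≠ 0) {σ : Equiv.Perm (Fin n)}
    (hσ : U.BlockTriangular σ) (hi : i ≤ n) (hj : j ≤ n) :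
    ((U * σ.permMatrix R).submatrix (Fin.castLE hi) (Fin.castLE hj)).rank =
      #{a : Fin i | (σ (a.castLE hi) : ℕ) < j} := by
  refine (rank_submatrix_castLE_mul_permMatrix_le hσ hi hj).antisymm
    (card_le_rank_submatrix_castLE_mul_permMatrix U σ hi hj _ (Fin.castLE hi)
      (fun a ha => (Finset.mem_filter.mp ha).2) (fun a _ b _ hba => hU hba) fun a _ => hd _)

theorem rank_submatrix_castLE_permMatrix {n i j : ℕ} (σ : Equiv.Perm (Fin n)) (hi : i ≤ n)
    (hj : j ≤ n) :
    ((σ.permMatrix R).submatrix (Fin.castLE hi) (Fin.castLE hj)).rank =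
      #{a : Fin i | (σ (a.castLE hi) : ℕ) < j} := by
  rw [← Matrix.one_mul (σ.permMatrix R)]
  exact rank_submatrix_castLE_mul_permMatrix blockTriangular_one (fun k => by simp)
    blockTriangular_one hi hj

theorem card_lt_rank_submatrix_castLE_mul_permMatrix {n : ℕ} {U : Matrix (Fin n) (Fin n) R}
    (hU : U.IsUpperTriangular) (hd : ∀ k, U k k ≠ 0) (σ : Equiv.Perm (Fin n)) {x y : Fin n}
    (hσ : σ y < σ x) (hxy : U x y ≠ 0) :
    #{a : Fin (x + 1) | (σ (a.castLE x.isLt) : ℕ) < σ x} <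
      ((U * σ.permMatrix R).submatrix (Fin.castLE x.isLt) (Fin.castLE (σ x).isLt.le)).rank := by
  classical
  set T : Finset (Fin (x + 1)) := {a | (σ (a.castLE x.isLt) : ℕ) < σ x}
  have hx : (Fin.last x).castLE x.isLt = x := Fin.ext rfl
  have hlast : Fin.last x ∉ T := by simp [T, hx]
  have hT : ∀ a ∈ T, a ≠ Fin.last x := fun a ha h => hlast (h ▸ ha)
  have := card_le_rank_submatrix_castLE_mul_permMatrix U σ x.isLt (σ x).isLt.le
    (insert (Fin.last x) T) (Function.update (Fin.castLE x.isLt) (Fin.last x) y) ?_ ?_ ?_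
  · rwa [Finset.card_insert_of_notMem hlast, Nat.succ_le_iff] at this
  · simp only [Finset.forall_mem_insert, Function.update_self]
    refine ⟨hσ, fun a ha => ?_⟩
    rw [Function.update_of_ne (hT a ha)]
    exact (Finset.mem_filter.mp ha).2
  · intro a _ b _ hba
    rw [Function.update_of_ne (hba.trans_le (Fin.le_last a)).ne]
    exact hU hba
  · simp only [Finset.forall_mem_insert, Function.update_self, hx]
    exact ⟨hxy, fun a ha => by rw [Function.update_of_ne (hT a ha)]; exact hd _⟩

end Matrix

theorem isRankProfileMatrix_permMatrix_iff {n : ℕ} {A : Matrix (Fin n) (Fin n) F} (hA : IsUnit A)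
    (σ : Equiv.Perm (Fin n)) :
    IsRankProfileMatrix A (σ.permMatrix F) ↔ ∀ (i j : ℕ) (hi : i ≤ n) (hj : j ≤ n),
      ((σ.permMatrix F).submatrix (Fin.castLE hi) (Fin.castLE hj)).rank =
        (A.submatrix (Fin.castLE hi) (Fin.castLE hj)).rank := by
  classical
  have hne : ∀ a b, σ.permMatrix F a b ≠ 0 ↔ σ a = b := fun a b => by
    by_cases hab : σ a = b <;> simp [hab, PEquiv.toMatrix_apply]
  refine ⟨fun h => h.2.2.2, fun h => ⟨fun a b => ?_, ?_, fun a b a' b' hab hab' => ?_, h⟩⟩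
  · by_cases hab : σ a = b <;> simp [hab, PEquiv.toMatrix_apply]
  · have hgraph : ({p : Fin n × Fin n | σ.permMatrix F p.1 p.2 ≠ 0} : Finset _) =
        Finset.univ.map ⟨fun a => (a, σ a), fun a b h => congrArg Prod.fst h⟩ := by
      ext ⟨a, b⟩
      simp only [Finset.mem_filter, Finset.mem_univ, true_and, Finset.mem_map, hne]
      constructor
      · rintro rfl
        exact ⟨a, rfl⟩
      · rintro ⟨c, ⟨⟩⟩
        rfl
    rw [rank_of_isUnit A hA, hgraph, Finset.card_map, Finset.card_univ]
  · rw [hne] at hab hab'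
    subst hab hab'
    exact σ.injective.eq_iff.symm

/-- for an invertible `A = L·U·P` with `L` invertible lower triangular,
`U` invertible upper triangular and `P` a permutation matrix, the rank profile matrix
of `A` equals `P` if and only if `Pᵀ·U·P` is upper triangular. -/
theorem rank_profile_matrix_eq_P_iff {n : ℕ}
    (A : Matrix (Fin n) (Fin n) F) (hA : IsUnit A)
    (L U P : Matrix (Fin n) (Fin n) F)
    (hLtri : ∀ i j : Fin n, i < j → L i j = 0) (hL : IsUnit L)
    (hUtri : ∀ i j : Fin n, j < i → U i j = 0) (hU : IsUnit U)
    (hP : IsPermMatrix P) (hLUP : A = L * U * P) :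
    IsRankProfileMatrix A P ↔ ∀ i j : Fin n, j < i → (Pᵀ * U * P) i j = 0 := by
  obtain ⟨σ, rfl⟩ := hP
  have hUtri : U.IsUpperTriangular := fun i j h => hUtri i j h
  have hLtri : L.IsLowerTriangular := fun i j h => hLtri i j h
  have hUd := hUtri.diag_ne_zero_of_isUnit hU
  have hleading : ∀ (i j : ℕ) (hi : i ≤ n) (hj : j ≤ n),
      (A.submatrix (Fin.castLE hi) (Fin.castLE hj)).rank =
        ((U * σ.permMatrix F).submatrix (Fin.castLE hi) (Fin.castLE hj)).rank := by
    intro i j hi hj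
    rw [hLUP, Matrix.mul_assoc]
    exact rank_submatrix_castLE_mul_of_isLowerTriangular hLtri
      (hLtri.diag_ne_zero_of_isUnit hL) _ hi _
  refine (isRankProfileMatrix_permMatrix_iff hA σ).trans <|
    Iff.trans ?_ (isUpperTriangular_transpose_permMatrix_mul_mul_permMatrix_iff U σ).symm
  simp only [hleading, rank_submatrix_castLE_permMatrix]
  refine ⟨fun h x y hσ => ?_, fun hσ i j hi hj => ?_⟩
  · by_contra hxy
    exact (card_lt_rank_submatrix_castLE_mul_permMatrix hUtri hUd σ hσ hxy).ne (h _ _ _ _)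
  · exact (rank_submatrix_castLE_mul_permMatrix hUtri hUd hσ hi hj).symm
end

section
/- Let F be a field, S ⊆ F a finite nonempty subset, A ∈ F^{m×n} and B ∈ F^{m×p}. Suppose there is no matrix X ∈ F^{n×p} with A·X = B. Then, for a vector x chosen uniformly at random from S^p, the probability that B·x lies in the column space of A (i.e., that there exists y ∈ F^n with A·y = B·x) is at most 1/|S|. -/
open Matrix

/-! If `B·x` and `B·x'` both lie in the column space of `A` and `x, x'` differ only in a
coordinate `j`, then `(x j - x' j) · B.col j` lies in it too; choosing `j` with `B.col j`
outside the column space (possible since `A·X = B` is unsolvable) forces `x j = x' j`.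
Hence the solutions `x ∈ S^p` are determined by their coordinates off `j`, and
`(x, s) ↦ x[j := s]` embeds `{solutions} × S` into `S^p`. -/

theorem Matrix.exists_mul_eq_of_forall_col_mem_range {R m n p : Type*} [Semiring R] [Fintype n]
    {A : Matrix m n R} {B : Matrix m p R} (h : ∀ j, ∃ y, A *ᵥ y = B.col j) :
    ∃ X : Matrix n p R, A * X = B := by
  choose Y hY using h
  refine ⟨(Matrix.of Y)ᵀ, ?_⟩
  ext i j
  simpa [Matrix.mul_apply, Matrix.mulVec, dotProduct] using congrFun (hY j) i

section Submodule

variable {F ι : Type*} [Field F] [DecidableEq ι] {W : Submodule F (ι → F)} {j : ι}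

theorem Submodule.eq_of_mem_of_forall_ne_eq (hj : Pi.single j 1 ∉ W) {x x' : ι → F}
    (hx : x ∈ W) (hx' : x' ∈ W) (hoff : ∀ i ≠ j, x i = x' i) : x = x' := by
  have hdiff : x - x' = (x j - x' j) • Pi.single j 1 := by
    rw [← Pi.single_smul', smul_eq_mul, mul_one]
    funext i
    by_cases hi : i = j
    · subst hi; simp
    · simp [hi, hoff i hi]
  have hxj : x j = x' j := by
    by_contra hne
    refine hj ?_
    have hc : x j - x' j ≠ 0 := sub_ne_zero.mpr hne
    rw [← inv_smul_smul₀ hc (Pi.single j 1), ← hdiff]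
    exact W.smul_mem _ (W.sub_mem hx hx')
  funext i
  by_cases hi : i = j
  · subst hi; exact hxj
  · exact hoff i hi

theorem Submodule.card_filter_mem_piFinset_mul_le [Fintype ι] [DecidablePred (· ∈ W)]
    (hj : Pi.single j 1 ∉ W) (t : ι → Finset F) :
    ((Fintype.piFinset t).filter (· ∈ W)).card * (t j).card ≤ (Fintype.piFinset t).card := by
  rw [← Finset.card_product]
  refine Finset.card_le_card_of_injOn (fun q => Function.update q.1 j q.2) ?_ ?_
  · rintro ⟨x, s⟩ hq
    simp only [Finset.coe_product, Set.mem_prod, Finset.mem_coe, Finset.mem_filter,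
      Fintype.mem_piFinset] at hq ⊢
    intro i
    by_cases hi : i = j
    · subst hi; simpa using hq.2
    · simpa [Function.update_of_ne hi] using hq.1.1 i
  · rintro ⟨x, s⟩ hq ⟨x', s'⟩ hq' heq
    simp only [Finset.coe_product, Set.mem_prod, Finset.mem_coe, Finset.mem_filter] at hq hq'
    have hoff : ∀ i ≠ j, x i = x' i := fun i hi => by
      simpa [Function.update_of_ne hi] using congrFun heq i
    have hs : s = s' := by simpa using congrFun heq j
    rw [eq_of_mem_of_forall_ne_eq hj hq.1.2 hq'.1.2 hoff, hs]

end Submodule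

open Classical in
theorem prob_Bx_in_colspace_le_general {F : Type*} [Field F] {m n p : ℕ}
    (S : Finset F)
    (A : Matrix (Fin m) (Fin n) F) (B : Matrix (Fin m) (Fin p) F)
    (hnoX : ¬ ∃ X : Matrix (Fin n) (Fin p) F, A * X = B) :
    ((Fintype.piFinset fun _ : Fin p => S).filter
        fun x => ∃ y : Fin n → F, A.mulVec y = B.mulVec x).card * S.card ≤
      (Fintype.piFinset fun _ : Fin p => S).card := by
  obtain ⟨j, hj⟩ : ∃ j, ¬ ∃ y, A *ᵥ y = B.col j := by
    by_contra! h
    exact hnoX (exists_mul_eq_of_forall_col_mem_range h)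
  let W : Submodule F (Fin p → F) := (LinearMap.range A.mulVecLin).comap B.mulVecLin
  have hmem : ∀ x, x ∈ W ↔ ∃ y, A *ᵥ y = B *ᵥ x := fun x => by simp [W]
  have hW : Pi.single j 1 ∉ W := by rwa [hmem, mulVec_single_one]
  convert Submodule.card_filter_mem_piFinset_mul_le hW (fun _ => S) using 4
  exact (hmem _).symm

open Classical in
/-- if `A·X = B` has no solution, then for `x` uniform over `S^p` the
probability that `B·x` lies in the column space of `A` is at most `1/|S|`, expressed
as: `#{x ∈ S^p | ∃ y, A·y = B·x} · |S| ≤ |S^p|`. -/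
theorem prob_Bx_in_colspace_le {F : Type*} [Field F] {m n p : ℕ}
    (S : Finset F) (hS : S.Nonempty)
    (A : Matrix (Fin m) (Fin n) F) (B : Matrix (Fin m) (Fin p) F)
    (hnoX : ¬ ∃ X : Matrix (Fin n) (Fin p) F, A * X = B) :
    ((Fintype.piFinset fun _ : Fin p => S).filter
        fun x => ∃ y : Fin n → F, A.mulVec y = B.mulVec x).card * S.card ≤
      (Fintype.piFinset fun _ : Fin p => S).card :=
  prob_Bx_in_colspace_le_general S A B hnoX
end

section
/- Let F be a field and let L ∈ F^{n×n} be a matrix that is NOT lower triangular, i.e., L_{i,j} ≠ 0 for some j > i. Let S' be a finite nonempty subset of F \ {0}, and let d_1, …, d_n be chosen independently and uniformly at random from S', with D = Diag(d_1, …, d_n). Then the probability that the representative Laurent polynomial P_{L·D}(X) has no nonzero coefficient of negative degree (i.e., is a polynomial in X) is at most 1/|S'|. Equivalently, with probability at least 1 − 1/|S'|, P_{L·D} has a nonzero coefficient of negative degree. -/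
/-!
Pick `i₀ < j₀` with `L i₀ j₀ ≠ 0`. The coefficient of `X^(i₀ - j₀)` in `P_{L·D}` is the linear form
`∑ⱼ (∑_{i - j = i₀ - j₀} L i j) dⱼ`, whose coefficient of `d_{j₀}` is `L i₀ j₀ ≠ 0`. It vanishes
whenever `P_{L·D}` is a polynomial, and by the Schwartz–Zippel lemma in degree one a nonzero
linear form vanishes on at most `|S'|^(n-1)` points of `S'^n`.
-/

open Matrix LaurentPolynomial

variable {F : Type*} [Field F]

/-- The representative Laurent polynomial of an `m×n` matrix `M` (1-based indices):
`P_M(X) = Σ_{i=1}^m Σ_{j=1}^n M_{i,j} X^{i−j}`. -/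
noncomputable def repLaurent {m n : ℕ} (M : Matrix (Fin m) (Fin n) F) :
    LaurentPolynomial F :=
  ∑ i : Fin m, ∑ j : Fin n,
    LaurentPolynomial.C (M i j) * LaurentPolynomial.T ((i : ℤ) - (j : ℤ))

theorem MvPolynomial.totalDegree_sum_C_mul_X_le {R σ : Type*} [CommSemiring R] [Fintype σ]
    (c : σ → R) : (∑ i, C (c i) * X i : MvPolynomial σ R).totalDegree ≤ 1 := by
  refine (totalDegree_finsetSum _ _).trans (Finset.sup_le fun i _ => ?_)
  rw [C_mul_X_eq_monomial]
  exact (totalDegree_monomial_le _ _).trans (by simp)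

open Finset Fintype in
theorem card_filter_sum_mul_eq_zero_mul_card_le {R : Type*} [CommRing R] [IsDomain R]
    [DecidableEq R] {n : ℕ} {c : Fin n → R} {j : Fin n} (hc : c j ≠ 0) (S : Finset R) :
    #{f ∈ piFinset fun _ ↦ S | ∑ i, c i * f i = 0} * #S ≤ #S ^ n := by
  obtain rfl | hS := S.eq_empty_or_nonempty
  · simp
  set p : MvPolynomial (Fin n) R := ∑ i, .C (c i) * .X i
  have hp : p ≠ 0 := fun h => hc <| by
    simpa [p, Pi.single_apply] using congrArg (MvPolynomial.eval (Pi.single j 1)) h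
  have hdeg : (p.totalDegree : ℚ≥0) ≤ 1 := by
    exact_mod_cast MvPolynomial.totalDegree_sum_C_mul_X_le c
  have hS₀ : (0 : ℚ≥0) < #S := by exact_mod_cast hS.card_pos
  have hsz := MvPolynomial.schwartz_zippel_totalDegree hp S
  simp only [p, map_sum, map_mul, MvPolynomial.eval_C, MvPolynomial.eval_X] at hsz
  rw [div_le_div_iff₀ (by positivity) hS₀] at hsz
  have := hsz.trans (by gcongr : _ ≤ (1 : ℚ≥0) * #S ^ n)
  exact_mod_cast this.trans_eq (one_mul _)

theorem Polynomial.coeff_toLaurent_of_neg {R : Type*} [Semiring R] (f : Polynomial R) {t : ℤ}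
    (ht : t < 0) : f.toLaurent.coeff t = 0 :=
  Finsupp.mapDomain_of_notMem_range _ _ fun ⟨m, hm⟩ => by simp [← hm] at ht; omega

theorem coeff_repLaurent {m n : ℕ} (M : Matrix (Fin m) (Fin n) F) (t : ℤ) :
    (repLaurent M).coeff t =
      ∑ i : Fin m, ∑ j : Fin n, if (i : ℤ) - (j : ℤ) = t then M i j else 0 := by
  simp [repLaurent, ← single_eq_C_mul_T, Finsupp.finsetSum_apply, Finsupp.single_apply]

theorem coeff_repLaurent_mul_diagonal {n : ℕ} (L : Matrix (Fin n) (Fin n) F) (d : Fin n → F)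
    (t : ℤ) : (repLaurent (L * diagonal d)).coeff t =
      ∑ j : Fin n, (∑ i : Fin n, if (i : ℤ) - (j : ℤ) = t then L i j else 0) * d j := by
  rw [coeff_repLaurent, Finset.sum_comm]
  simp [Finset.sum_mul, mul_diagonal, ite_mul]

theorem sum_ite_sub_eq_sub {n : ℕ} (L : Matrix (Fin n) (Fin n) F) (i₀ j : Fin n) :
    (∑ i : Fin n, if (i : ℤ) - (j : ℤ) = (i₀ : ℤ) - j then L i j else 0) = L i₀ j := by
  simp [Fin.val_inj]

open Classical in
theorem prob_repLaurent_polynomial_le_general {n : ℕ}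
    (L : Matrix (Fin n) (Fin n) F)
    (hL : ∃ i j : Fin n, i < j ∧ L i j ≠ 0)
    (S' : Finset F) :
    ((Fintype.piFinset fun _ : Fin n => S').filter
        fun d => ∃ p : Polynomial F,
          p.toLaurent = repLaurent (L * Matrix.diagonal d)).card * S'.card ≤
      (Fintype.piFinset fun _ : Fin n => S').card := by
  obtain ⟨i₀, j₀, hij, hL₀⟩ := hL
  have hneg : (i₀ : ℤ) - j₀ < 0 := by have : (i₀ : ℕ) < j₀ := hij; omega
  set c : Fin n → F := fun j => ∑ i : Fin n, if (i : ℤ) - j = (i₀ : ℤ) - j₀ then L i j else 0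
  have hc : c j₀ ≠ 0 := by simpa only [c, sum_ite_sub_eq_sub] using hL₀
  calc _ ≤ ((Fintype.piFinset fun _ : Fin n => S').filter
          fun d => ∑ j, c j * d j = 0).card * S'.card := by
        gcongr with d _
        rintro ⟨p, hp⟩
        rw [← coeff_repLaurent_mul_diagonal, ← hp, p.coeff_toLaurent_of_neg hneg]
    _ ≤ S'.card ^ n := card_filter_sum_mul_eq_zero_mul_card_le hc S'
    _ = _ := by simp

open Classical in
/-- if `L` is not lower triangular and `D = Diag(d₁,…,dₙ)` with the
`dᵢ` drawn independently and uniformly from a finite set `S' ⊆ F \ {0}`, then the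
probability that `P_{L·D}` has no nonzero coefficient of negative degree (i.e. is a
polynomial) is at most `1/|S'|`, expressed as:
`#{d ∈ S'^n | P_{L·D} is a polynomial} · |S'| ≤ |S'^n|`. -/
theorem prob_repLaurent_polynomial_le {n : ℕ}
    (L : Matrix (Fin n) (Fin n) F)
    (hL : ∃ i j : Fin n, i < j ∧ L i j ≠ 0)
    (S' : Finset F) (hS' : S'.Nonempty) (h0 : (0 : F) ∉ S') :
    ((Fintype.piFinset fun _ : Fin n => S').filter
        fun d => ∃ p : Polynomial F,
          p.toLaurent = repLaurent (L * Matrix.diagonal d)).card * S'.card ≤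
      (Fintype.piFinset fun _ : Fin n => S').card :=
  prob_repLaurent_polynomial_le_general L hL S'
end
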